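/- For each index i ∈ {1,…,n}, one has i ∈ 𝓘_# (i.e., R(X'X)⁻¹xᵢ·' = 0) if and only if the orthogonal projection of eᵢ(n) onto span(X) lies in 𝔐₀^lin = {Xβ : Rβ = 0}. -/
import Mathlib


open Matrix

/-- `R (XᵀX)⁻¹ Xᵀ`, the 1×n row vector whose i-th entry is `R(X'X)⁻¹xᵢ·'`. -/
noncomputable def cRow {n k : ℕ} (X : Matrix (Fin n) (Fin k) ℝ)
    (R : Matrix (Fin 1) (Fin k) ℝ) : Matrix (Fin 1) (Fin n) ℝ :=
  R * (Xᵀ * X)⁻¹ * Xᵀ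

/-- OLS estimator `β̂(y) = (X'X)⁻¹X'y`. -/
noncomputable def betaHat {n k : ℕ} (X : Matrix (Fin n) (Fin k) ℝ)
    (y : Fin n → ℝ) : Fin k → ℝ :=
  ((Xᵀ * X)⁻¹ * Xᵀ).mulVec y

/-- Residual vector `û(y) = y - Xβ̂(y)`. -/
noncomputable def uHat {n k : ℕ} (X : Matrix (Fin n) (Fin k) ℝ)
    (y : Fin n → ℝ) : Fin n → ℝ :=
  y - X.mulVec (betaHat X y)

/-- `B(y) = R(X'X)⁻¹X' diag(û₁(y),…,ûₙ(y))`, viewed as a vector in ℝⁿ. -/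
noncomputable def Bmap {n k : ℕ} (X : Matrix (Fin n) (Fin k) ℝ)
    (R : Matrix (Fin 1) (Fin k) ℝ) (y : Fin n → ℝ) : Fin n → ℝ :=
  fun i => cRow X R 0 i * uHat X y i

/-- The set `𝖡 = {y : B(y) = 0}`. -/
noncomputable def Bset {n k : ℕ} (X : Matrix (Fin n) (Fin k) ℝ)
    (R : Matrix (Fin 1) (Fin k) ℝ) : Set (Fin n → ℝ) :=
  {y | Bmap X R y = 0}

/-- `Ω̂_Het(y) = R(X'X)⁻¹X' diag(d₁û₁²(y),…,dₙûₙ²(y)) X(X'X)⁻¹R'`. -/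
noncomputable def OmegaHat {n k : ℕ} (X : Matrix (Fin n) (Fin k) ℝ)
    (R : Matrix (Fin 1) (Fin k) ℝ) (d : Fin n → ℝ) (y : Fin n → ℝ) : ℝ :=
  (R * (Xᵀ * X)⁻¹ * Xᵀ * Matrix.diagonal (fun i => d i * (uHat X y i) ^ 2) *
    X * (Xᵀ * X)⁻¹ * Rᵀ) 0 0

/-- Heteroskedasticity robust test statistic `T_Het`. -/
noncomputable def THet {n k : ℕ} (X : Matrix (Fin n) (Fin k) ℝ)
    (R : Matrix (Fin 1) (Fin k) ℝ) (d : Fin n → ℝ) (r : ℝ) (y : Fin n → ℝ) : ℝ :=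
  if OmegaHat X R d y ≠ 0 then (R.mulVec (betaHat X y) 0 - r) ^ 2 / OmegaHat X R d y
  else 0

/-- `𝔐₀^lin = {Xβ : Rβ = 0}`. -/
def M0lin {n k : ℕ} (X : Matrix (Fin n) (Fin k) ℝ)
    (R : Matrix (Fin 1) (Fin k) ℝ) : Set (Fin n → ℝ) :=
  {y | ∃ β : Fin k → ℝ, y = X.mulVec β ∧ R.mulVec β 0 = 0}

/-- `𝓥_# = span{eᵢ(n) : i ∈ 𝓘_#, eᵢ(n) ∈ 𝖡}`. -/
noncomputable def Vsharp {n k : ℕ} (X : Matrix (Fin n) (Fin k) ℝ)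
    (R : Matrix (Fin 1) (Fin k) ℝ) : Submodule ℝ (Fin n → ℝ) :=
  Submodule.span ℝ ((fun i => (Pi.single i 1 : Fin n → ℝ)) ''
    {i | cRow X R 0 i = 0 ∧ (Pi.single i 1 : Fin n → ℝ) ∈ Bset X R})

/-- `𝓛_# = span(𝔐₀^lin ∪ 𝓥_#)`. -/
noncomputable def Lsharp {n k : ℕ} (X : Matrix (Fin n) (Fin k) ℝ)
    (R : Matrix (Fin 1) (Fin k) ℝ) : Submodule ℝ (Fin n → ℝ) :=
  Submodule.span ℝ (M0lin X R ∪ (Vsharp X R : Set (Fin n → ℝ)))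

lemma isUnit_XtX {n k : ℕ} (X : Matrix (Fin n) (Fin k) ℝ) (hX : X.rank = k) :
    IsUnit (Xᵀ * X) := by
  rw [← Matrix.mulVec_injective_iff_isUnit]
  have hker : LinearMap.ker (Xᵀ * X).mulVecLin = ⊥ := by
    rw [Matrix.ker_mulVecLin_transpose_mul_self]
    have := LinearMap.finrank_range_add_finrank_ker X.mulVecLin
    rw [show Module.finrank ℝ (LinearMap.range X.mulVecLin) = X.rank from rfl, hX] at this
    simp only [Module.finrank_fin_fun] at this
    exact Submodule.finrank_eq_zero.mp (by omega)
  intro x y hxy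
  exact LinearMap.ker_eq_bot.mp hker (hxy : (Xᵀ * X).mulVecLin x = (Xᵀ * X).mulVecLin y)

lemma cRow_eq {n k : ℕ} (X : Matrix (Fin n) (Fin k) ℝ) (hX : X.rank = k)
    (R : Matrix (Fin 1) (Fin k) ℝ) (i : Fin n) (β : Fin k → ℝ)
    (hβ : Xᵀ.mulVec (Pi.single i 1) = (Xᵀ * X).mulVec β) :
    cRow X R 0 i = R.mulVec β 0 := by
  have hdet : IsUnit (Xᵀ * X).det := (Matrix.isUnit_iff_isUnit_det _).mp (isUnit_XtX X hX)
  have h1 : cRow X R 0 i = (R * (Xᵀ * X)⁻¹).mulVec (Xᵀ.mulVec (Pi.single i 1)) 0 := by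
    rw [Matrix.mulVec_mulVec, Matrix.mulVec_single]
    simp [cRow, Matrix.mul_assoc]
  rw [h1, hβ, Matrix.mulVec_mulVec, Matrix.mul_assoc,
    Matrix.nonsing_inv_mul _ hdet, Matrix.mul_one]

theorem stmt13    {n k : ℕ} (hk : 1 ≤ k) (hkn : k < n)
    (X : Matrix (Fin n) (Fin k) ℝ) (hX : X.rank = k)
    (R : Matrix (Fin 1) (Fin k) ℝ) (hR : R ≠ 0) :
    ∀ i : Fin n, ∀ p ∈ Set.range X.mulVec,
      (∀ v ∈ Set.range X.mulVec, ((Pi.single i 1 : Fin n → ℝ) - p) ⬝ᵥ v = 0) →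
      (cRow X R 0 i = 0 ↔ p ∈ M0lin X R) := by
  intro i p hp hperp
  obtain ⟨β, hβ⟩ := hp
  have h0 : Xᵀ.mulVec ((Pi.single i 1 : Fin n → ℝ) - p) = 0 := by
    funext j
    have := hperp (X.mulVec (Pi.single j 1)) ⟨_, rfl⟩
    simpa [Matrix.mulVec, dotProduct, Matrix.transpose_apply, Pi.single_apply,
      mul_comm, Finset.mul_sum, Finset.sum_mul] using this
  have h2 : Xᵀ.mulVec (Pi.single i 1) = Xᵀ.mulVec p :=
    sub_eq_zero.mp (by rw [← Matrix.mulVec_sub]; exact h0)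
  have horth : ∀ q : Fin k → ℝ, p = X.mulVec q →
      Xᵀ.mulVec (Pi.single i 1) = (Xᵀ * X).mulVec q := by
    intro q hq
    rw [h2, hq, Matrix.mulVec_mulVec]
  constructor
  · intro hc
    exact ⟨β, hβ.symm, by rw [← cRow_eq X hX R i β (horth β hβ.symm)]; exact hc⟩
  · rintro ⟨γ, hγ, hRγ⟩
    rw [cRow_eq X hX R i γ (horth γ hγ)]
    exact hRγ
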